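/- In the ideal asymmetric core-periphery network, the number of 3-element subsets of V inducing triad type 300 equals C(a,3), the number inducing triad type 120D equals C(a,2)·b, the number inducing triad type 021U equals a·C(b,2), the number inducing triad type 003 equals C(b,3), and no 3-element subset induces any other triad type. -/
import Mathlib


variable {V : Type*}

/-- Dyad `{i, j}` is mutual: both arcs present. -/
def Mutual (A : V → V → Prop) (i j : V) : Prop := A i j ∧ A j i

/-- Dyad `{i, j}` is null: no arc present. -/
def NullDyad (A : V → V → Prop) (i j : V) : Prop := ¬ A i j ∧ ¬ A j i

/-- Dyad `{i, j}` is asymmetric: exactly one of the two arcs is present. -/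
def AsymDyad (A : V → V → Prop) (i j : V) : Prop :=
  (A i j ∧ ¬ A j i) ∨ (¬ A i j ∧ A j i)

/-- Triad type 003: all three dyads null. -/
def Triad003 (A : V → V → Prop) (i j k : V) : Prop :=
  NullDyad A i j ∧ NullDyad A j k ∧ NullDyad A i k

/-- Triad type 300: all three dyads mutual. -/
def Triad300 (A : V → V → Prop) (i j k : V) : Prop :=
  Mutual A i j ∧ Mutual A j k ∧ Mutual A i k

/-- Triad type 102: one mutual dyad, both remaining dyads null. -/
def Triad102 (A : V → V → Prop) (i j k : V) : Prop :=
  (Mutual A i j ∧ NullDyad A j k ∧ NullDyad A i k) ∨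
  (Mutual A j k ∧ NullDyad A i j ∧ NullDyad A i k) ∨
  (Mutual A i k ∧ NullDyad A i j ∧ NullDyad A j k)

/-- Triad type 201: two mutual dyads, the remaining dyad null. -/
def Triad201 (A : V → V → Prop) (i j k : V) : Prop :=
  (Mutual A i j ∧ Mutual A j k ∧ NullDyad A i k) ∨
  (Mutual A i j ∧ Mutual A i k ∧ NullDyad A j k) ∨
  (Mutual A j k ∧ Mutual A i k ∧ NullDyad A i j)

/-- Triad type 012: exactly one asymmetric dyad, both remaining dyads null. -/
def Triad012 (A : V → V → Prop) (i j k : V) : Prop :=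
  (AsymDyad A i j ∧ NullDyad A j k ∧ NullDyad A i k) ∨
  (AsymDyad A j k ∧ NullDyad A i j ∧ NullDyad A i k) ∨
  (AsymDyad A i k ∧ NullDyad A i j ∧ NullDyad A j k)

/-- Two asymmetric arcs `x → z` and `y → z` with common head `z`, dyad `{x, y}` null. -/
def Head021U (A : V → V → Prop) (x y z : V) : Prop :=
  A x z ∧ A y z ∧ ¬ A z x ∧ ¬ A z y ∧ NullDyad A x y

/-- Triad type 021U: two asymmetric arcs with a common head, remaining dyad null. -/
def Triad021U (A : V → V → Prop) (i j k : V) : Prop :=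
  Head021U A i j k ∨ Head021U A i k j ∨ Head021U A j k i

/-- Two asymmetric arcs `z → x` and `z → y` with common tail `z`, dyad `{x, y}` null. -/
def Tail021D (A : V → V → Prop) (x y z : V) : Prop :=
  A z x ∧ A z y ∧ ¬ A x z ∧ ¬ A y z ∧ NullDyad A x y

/-- Triad type 021D: two asymmetric arcs with a common tail, remaining dyad null. -/
def Triad021D (A : V → V → Prop) (i j k : V) : Prop :=
  Tail021D A i j k ∨ Tail021D A i k j ∨ Tail021D A j k i

/-- A directed path `x → y → z` with all other arcs among the three vertices absent. -/
def Path021C (A : V → V → Prop) (x y z : V) : Prop :=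
  A x y ∧ A y z ∧ ¬ A y x ∧ ¬ A z y ∧ NullDyad A x z

/-- Triad type 021C. -/
def Triad021C (A : V → V → Prop) (i j k : V) : Prop :=
  Path021C A i j k ∨ Path021C A i k j ∨ Path021C A j i k ∨
  Path021C A j k i ∨ Path021C A k i j ∨ Path021C A k j i

/-- Mutual dyad `{x, y}` plus asymmetric arcs from each of `x`, `y` to the third vertex `z`. -/
def Up120 (A : V → V → Prop) (x y z : V) : Prop :=
  Mutual A x y ∧ A x z ∧ A y z ∧ ¬ A z x ∧ ¬ A z y

/-- Triad type 120U. -/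
def Triad120U (A : V → V → Prop) (i j k : V) : Prop :=
  Up120 A i j k ∨ Up120 A i k j ∨ Up120 A j k i

/-- Mutual dyad `{x, y}` plus asymmetric arcs from the third vertex `z` to each of `x`, `y`. -/
def Down120 (A : V → V → Prop) (x y z : V) : Prop :=
  Mutual A x y ∧ A z x ∧ A z y ∧ ¬ A x z ∧ ¬ A y z

/-- Triad type 120D. -/
def Triad120D (A : V → V → Prop) (i j k : V) : Prop :=
  Down120 A i j k ∨ Down120 A i k j ∨ Down120 A j k i

/-- Transitive triple: arcs `x → y`, `y → z`, `x → z`, with no reverse arcs. -/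
def Trans030 (A : V → V → Prop) (x y z : V) : Prop :=
  A x y ∧ A y z ∧ A x z ∧ ¬ A y x ∧ ¬ A z y ∧ ¬ A z x

/-- Triad type 030T. -/
def Triad030T (A : V → V → Prop) (i j k : V) : Prop :=
  Trans030 A i j k ∨ Trans030 A i k j ∨ Trans030 A j i k ∨
  Trans030 A j k i ∨ Trans030 A k i j ∨ Trans030 A k j i

/-- Cyclic triple: arcs `x → y`, `y → z`, `z → x`, with no reverse arcs. -/
def Cycle030 (A : V → V → Prop) (x y z : V) : Prop :=
  A x y ∧ A y z ∧ A z x ∧ ¬ A y x ∧ ¬ A z y ∧ ¬ A x z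

/-- Triad type 030C. -/
def Triad030C (A : V → V → Prop) (i j k : V) : Prop :=
  Cycle030 A i j k ∨ Cycle030 A i k j

/-- The 3-element subset `s` induces the triad type `T`. -/
def InducesTriad [DecidableEq V] (T : V → V → V → Prop) (s : Finset V) : Prop :=
  ∃ i j k : V, i ≠ j ∧ i ≠ k ∧ j ≠ k ∧ s = {i, j, k} ∧ T i j k

/-- The ideal asymmetric core-periphery network (`c v = true` means `v` is a core vertex):
an arc from `i` to `j` iff `i ≠ j` and `j` is in the core. -/
def AsymCPAdj (c : V → Bool) (i j : V) : Prop := i ≠ j ∧ c j = true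

section AuxCensus
variable {V : Type*} [DecidableEq V]

lemma filter_card_tri (q : V → Prop) [DecidablePred q] {i j k : V}
    (hij : i ≠ j) (hik : i ≠ k) (hjk : j ≠ k) :
    (({i, j, k} : Finset V).filter q).card =
      (if q i then 1 else 0) + ((if q j then 1 else 0) + (if q k then 1 else 0)) := by
  rw [Finset.card_filter]
  rw [show ({i, j, k} : Finset V) = insert i (insert j {k}) from rfl]
  rw [Finset.sum_insert (by simp [hij, hik]), Finset.sum_insert (by simp [hjk]),
    Finset.sum_singleton]

lemma count_split (C P : Finset V) (h : Disjoint C P) (m n : ℕ) :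
    {s : Finset V | (s ∩ C).card = m ∧ (s ∩ P).card = n ∧ s ⊆ C ∪ P}.ncard
      = C.card.choose m * P.card.choose n := by
  classical
  have key : ∀ p : Finset V × Finset V, p ∈ C.powersetCard m ×ˢ P.powersetCard n →
      (p.1 ∪ p.2) ∩ C = p.1 ∧ (p.1 ∪ p.2) ∩ P = p.2 := by
    rintro ⟨t, u⟩ hp
    simp only [Finset.mem_product, Finset.mem_powersetCard] at hp
    obtain ⟨⟨htC, htm⟩, huP, hun⟩ := hp
    constructor
    · rw [Finset.union_inter_distrib_right, Finset.inter_eq_left.mpr htC,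
        Finset.disjoint_iff_inter_eq_empty.mp (h.symm.mono_left huP), Finset.union_empty]
    · rw [Finset.union_inter_distrib_right, Finset.inter_eq_left.mpr huP,
        Finset.disjoint_iff_inter_eq_empty.mp (h.mono_left htC), Finset.empty_union]
  have hset : {s : Finset V | (s ∩ C).card = m ∧ (s ∩ P).card = n ∧ s ⊆ C ∪ P} =
      ↑((C.powersetCard m ×ˢ P.powersetCard n).image fun p => p.1 ∪ p.2) := by
    ext s
    simp only [Set.mem_setOf_eq, Finset.coe_image, Set.mem_image, Finset.mem_coe]
    constructor
    · rintro ⟨h1, h2, h3⟩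
      refine ⟨(s ∩ C, s ∩ P), ?_, ?_⟩
      · simp only [Finset.mem_product, Finset.mem_powersetCard]
        exact ⟨⟨Finset.inter_subset_right, h1⟩, Finset.inter_subset_right, h2⟩
      · rw [← Finset.inter_union_distrib_left, Finset.inter_eq_left.mpr h3]
    · rintro ⟨p, hp, rfl⟩
      obtain ⟨h1, h2⟩ := key p hp
      simp only [Finset.mem_product, Finset.mem_powersetCard] at hp
      refine ⟨by rw [h1]; exact hp.1.2, by rw [h2]; exact hp.2.2,
        Finset.union_subset_union hp.1.1 hp.2.1⟩
  rw [hset, Set.ncard_coe_finset, Finset.card_image_of_injOn, Finset.card_product,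
    Finset.card_powersetCard, Finset.card_powersetCard]
  intro p hp q hq hpq
  obtain ⟨hp1, hp2⟩ := key p (by simpa using hp)
  obtain ⟨hq1, hq2⟩ := key q (by simpa using hq)
  have hpq' : p.1 ∪ p.2 = q.1 ∪ q.2 := hpq
  have e1 : p.1 = q.1 := by rw [← hp1, ← hq1, hpq']
  have e2 : p.2 = q.2 := by rw [← hp2, ← hq2, hpq']
  exact Prod.ext e1 e2

lemma induces_set_eq (T : V → V → V → Prop) (q : V → Prop) [DecidablePred q] (m : ℕ)
    (hT : ∀ i j k : V, i ≠ j → i ≠ k → j ≠ k →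
      (T i j k ↔ (({i, j, k} : Finset V).filter q).card = m)) :
    {s : Finset V | InducesTriad T s} =
      {s : Finset V | s.card = 3 ∧ (s.filter q).card = m} := by
  ext s
  simp only [Set.mem_setOf_eq, InducesTriad]
  constructor
  · rintro ⟨i, j, k, hij, hik, hjk, rfl, hT'⟩
    refine ⟨?_, (hT i j k hij hik hjk).mp hT'⟩
    rw [Finset.card_insert_of_notMem (by simp [hij, hik]),
      Finset.card_insert_of_notMem (by simp [hjk]), Finset.card_singleton]
  · rintro ⟨h3, hm⟩
    obtain ⟨i, j, k, hij, hik, hjk, rfl⟩ := Finset.card_eq_three.mp h3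
    exact ⟨i, j, k, hij, hik, hjk, rfl, (hT i j k hij hik hjk).mpr hm⟩

lemma triad300_iff (c : V → Bool) {i j k : V} (hij : i ≠ j) (hik : i ≠ k) (hjk : j ≠ k) :
    Triad300 (AsymCPAdj c) i j k ↔
      (({i, j, k} : Finset V).filter (fun v => c v = true)).card = 3 := by
  rw [filter_card_tri _ hij hik hjk]
  cases hci : c i <;> cases hcj : c j <;> cases hck : c k <;>
    simp [Triad300, Mutual, AsymCPAdj, hij, hik, hjk, hij.symm, hik.symm, hjk.symm,
      hci, hcj, hck]

lemma triad120D_iff (c : V → Bool) {i j k : V} (hij : i ≠ j) (hik : i ≠ k) (hjk : j ≠ k) :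
    Triad120D (AsymCPAdj c) i j k ↔
      (({i, j, k} : Finset V).filter (fun v => c v = true)).card = 2 := by
  rw [filter_card_tri _ hij hik hjk]
  cases hci : c i <;> cases hcj : c j <;> cases hck : c k <;>
    simp [Triad120D, Down120, Mutual, AsymCPAdj, hij, hik, hjk, hij.symm, hik.symm, hjk.symm,
      hci, hcj, hck]

lemma triad021U_iff (c : V → Bool) {i j k : V} (hij : i ≠ j) (hik : i ≠ k) (hjk : j ≠ k) :
    Triad021U (AsymCPAdj c) i j k ↔
      (({i, j, k} : Finset V).filter (fun v => c v = true)).card = 1 := by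
  rw [filter_card_tri _ hij hik hjk]
  cases hci : c i <;> cases hcj : c j <;> cases hck : c k <;>
    simp [Triad021U, Head021U, NullDyad, AsymCPAdj, hij, hik, hjk, hij.symm, hik.symm,
      hjk.symm, hci, hcj, hck]

lemma triad003_iff (c : V → Bool) {i j k : V} (hij : i ≠ j) (hik : i ≠ k) (hjk : j ≠ k) :
    Triad003 (AsymCPAdj c) i j k ↔
      (({i, j, k} : Finset V).filter (fun v => c v = true)).card = 0 := by
  rw [filter_card_tri _ hij hik hjk]
  cases hci : c i <;> cases hcj : c j <;> cases hck : c k <;>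
    simp [Triad003, NullDyad, AsymCPAdj, hij, hik, hjk, hij.symm, hik.symm, hjk.symm,
      hci, hcj, hck]

lemma main_count [Fintype V] (c : V → Bool) (T : V → V → V → Prop) (m n : ℕ) (hmn : m + n = 3)
    (hT : ∀ i j k : V, i ≠ j → i ≠ k → j ≠ k →
      (T i j k ↔ (({i, j, k} : Finset V).filter (fun v => c v = true)).card = m)) :
    {s : Finset V | InducesTriad T s}.ncard =
      (Finset.univ.filter fun v => c v = true).card.choose m *
        (Finset.univ.filter fun v => c v = false).card.choose n := by
  classical
  set Cs := Finset.univ.filter fun v => c v = true with hCs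
  set Ps := Finset.univ.filter fun v => c v = false with hPs
  have hdisj : Disjoint Cs Ps := by
    rw [Finset.disjoint_left]
    intro v hv hv'
    simp [hCs, hPs] at hv hv'
    rw [hv] at hv'; exact Bool.noConfusion hv'
  have hinterC : ∀ s : Finset V, s ∩ Cs = s.filter (fun v => c v = true) := by
    intro s; ext v; simp [hCs]
  have hinterP : ∀ s : Finset V, s ∩ Ps = s.filter (fun v => c v = false) := by
    intro s; ext v; simp [hPs]
  have hcard : ∀ s : Finset V,
      (s.filter fun v => c v = true).card + (s.filter fun v => c v = false).card = s.card := by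
    intro s
    rw [show (s.filter fun v => c v = false) = s.filter (fun v => ¬ (c v = true)) by
      ext v; simp]
    exact Finset.card_filter_add_card_filter_not _
  rw [induces_set_eq T _ m hT]
  have hseteq : {s : Finset V | s.card = 3 ∧ (s.filter fun v => c v = true).card = m} =
      {s : Finset V | (s ∩ Cs).card = m ∧ (s ∩ Ps).card = n ∧ s ⊆ Cs ∪ Ps} := by
    ext s
    simp only [Set.mem_setOf_eq, hinterC, hinterP]
    have hsub : s ⊆ Cs ∪ Ps := by
      intro v _
      simp only [Finset.mem_union, hCs, hPs, Finset.mem_filter, Finset.mem_univ, true_and]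
      cases c v <;> simp
    constructor
    · rintro ⟨h3, hm⟩
      have := hcard s
      exact ⟨hm, by omega, hsub⟩
    · rintro ⟨hm, hn, -⟩
      have := hcard s
      exact ⟨by omega, hm⟩
  rw [hseteq, count_split Cs Ps hdisj m n]
end AuxCensus

/-- Triad census of the ideal asymmetric core-periphery network. -/
theorem asymCP_triad_census {V : Type*} [Fintype V] [DecidableEq V]
    (c : V → Bool) (a b : ℕ)
    (ha : a = (Finset.univ.filter fun v => c v = true).card)
    (hb : b = (Finset.univ.filter fun v => c v = false).card) :
    {s : Finset V | InducesTriad (Triad300 (AsymCPAdj c)) s}.ncard = a.choose 3 ∧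
    {s : Finset V | InducesTriad (Triad120D (AsymCPAdj c)) s}.ncard = a.choose 2 * b ∧
    {s : Finset V | InducesTriad (Triad021U (AsymCPAdj c)) s}.ncard = a * b.choose 2 ∧
    {s : Finset V | InducesTriad (Triad003 (AsymCPAdj c)) s}.ncard = b.choose 3 ∧
    (∀ s : Finset V, s.card = 3 →
        InducesTriad (Triad300 (AsymCPAdj c)) s ∨
        InducesTriad (Triad120D (AsymCPAdj c)) s ∨
        InducesTriad (Triad021U (AsymCPAdj c)) s ∨
        InducesTriad (Triad003 (AsymCPAdj c)) s) := by
  constructor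
  · rw [main_count c _ 3 0 rfl (fun i j k hij hik hjk => triad300_iff c hij hik hjk), ← ha, ← hb]
    simp
  constructor
  · rw [main_count c _ 2 1 rfl (fun i j k hij hik hjk => triad120D_iff c hij hik hjk), ← ha, ← hb]
    simp
  constructor
  · rw [main_count c _ 1 2 rfl (fun i j k hij hik hjk => triad021U_iff c hij hik hjk), ← ha, ← hb]
    simp
  constructor
  · rw [main_count c _ 0 3 rfl (fun i j k hij hik hjk => triad003_iff c hij hik hjk), ← ha, ← hb]
    simp
  · intro s hs
    obtain ⟨i, j, k, hij, hik, hjk, rfl⟩ := Finset.card_eq_three.mp hs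
    have hcnt := filter_card_tri (fun v => c v = true) hij hik hjk
    cases hci : c i <;> cases hcj : c j <;> cases hck : c k
    · exact Or.inr (Or.inr (Or.inr ⟨i, j, k, hij, hik, hjk, rfl,
        (triad003_iff c hij hik hjk).mpr (by rw [hcnt]; simp [hci, hcj, hck])⟩))
    · exact Or.inr (Or.inr (Or.inl ⟨i, j, k, hij, hik, hjk, rfl,
        (triad021U_iff c hij hik hjk).mpr (by rw [hcnt]; simp [hci, hcj, hck])⟩))
    · exact Or.inr (Or.inr (Or.inl ⟨i, j, k, hij, hik, hjk, rfl,
        (triad021U_iff c hij hik hjk).mpr (by rw [hcnt]; simp [hci, hcj, hck])⟩))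
    · exact Or.inr (Or.inl ⟨i, j, k, hij, hik, hjk, rfl,
        (triad120D_iff c hij hik hjk).mpr (by rw [hcnt]; simp [hci, hcj, hck])⟩)
    · exact Or.inr (Or.inr (Or.inl ⟨i, j, k, hij, hik, hjk, rfl,
        (triad021U_iff c hij hik hjk).mpr (by rw [hcnt]; simp [hci, hcj, hck])⟩))
    · exact Or.inr (Or.inl ⟨i, j, k, hij, hik, hjk, rfl,
        (triad120D_iff c hij hik hjk).mpr (by rw [hcnt]; simp [hci, hcj, hck])⟩)
    · exact Or.inr (Or.inl ⟨i, j, k, hij, hik, hjk, rfl,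
        (triad120D_iff c hij hik hjk).mpr (by rw [hcnt]; simp [hci, hcj, hck])⟩)
    · exact Or.inl ⟨i, j, k, hij, hik, hjk, rfl,
        (triad300_iff c hij hik hjk).mpr (by rw [hcnt]; simp [hci, hcj, hck])⟩
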